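/- arXiv:2605.05168 — 3 statements merged into one kernel-verified Lean document; each statement's English description precedes it below -/
import Mathlib

section
/- Let v, ṽ, w be vectors in a real inner product space with ‖v‖ = ‖ṽ‖ = r > 0 and ⟨w, ṽ⟩ = 0. Set c := ⟨v, ṽ⟩/r² (so |c| ≤ 1 by Cauchy–Schwarz). Then |⟨w, v⟩| / r ≤ ‖w‖ · √(1 − c²). In words: the norm of the orthogonal projection of w onto span(v) is at most ‖w‖ times the sine of the angle between v and ṽ, whenever w is orthogonal to ṽ. -/
open scoped RealInnerProductSpace

section

variable {E : Type*} [NormedAddCommGroup E] [InnerProductSpace ℝ E]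

theorem abs_real_inner_le_norm_mul_norm_sub_smul {v v' w : E} (hw : ⟪w, v'⟫ = 0) (c : ℝ) :
    |⟪w, v⟫| ≤ ‖w‖ * ‖v - c • v'‖ := by
  have hshift : ⟪w, v⟫ = ⟪w, v - c • v'⟫ := by
    simp only [inner_sub_right, inner_smul_right, hw, mul_zero, sub_zero]
  rw [hshift]
  exact abs_real_inner_le_norm w _

theorem norm_sub_inner_div_smul_of_norm_eq {v v' : E} (h : ‖v'‖ = ‖v‖) :
    ‖v - (⟪v, v'⟫ / ‖v‖ ^ 2) • v'‖ = ‖v‖ * √(1 - (⟪v, v'⟫ / ‖v‖ ^ 2) ^ 2) := by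
  set c := ⟪v, v'⟫ / ‖v‖ ^ 2
  -- `c` is junk (`= 0`) when `v = 0`, but then `⟪v, v'⟫ = 0` as well.
  have hc : ⟪v, v'⟫ = c * ‖v‖ ^ 2 := by
    rcases eq_or_ne v 0 with rfl | hv
    · simp
    · rw [div_mul_cancel₀ _ (by positivity)]
  have hsq : ‖v - c • v'‖ ^ 2 = ‖v‖ ^ 2 * (1 - c ^ 2) := by
    rw [norm_sub_sq_real, inner_smul_right, norm_smul, h, hc, Real.norm_eq_abs, mul_pow, sq_abs]
    ring
  rw [← Real.sqrt_sq (norm_nonneg (v - c • v')), hsq, Real.sqrt_mul (sq_nonneg _),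
    Real.sqrt_sq (norm_nonneg v)]

end

theorem proj_norm_le_sine_general
    {E : Type*} [NormedAddCommGroup E] [InnerProductSpace ℝ E]
    (v v' w : E) (r : ℝ)
    (hv : ‖v‖ = r) (hv' : ‖v'‖ = r)
    (hw : ⟪w, v'⟫ = 0) :
    |⟪w, v⟫| / r ≤ ‖w‖ * Real.sqrt (1 - (⟪v, v'⟫ / r ^ 2) ^ 2) := by
  subst hv
  have hproj := abs_real_inner_le_norm_mul_norm_sub_smul (v := v) hw (⟪v, v'⟫ / ‖v‖ ^ 2)
  rw [norm_sub_inner_div_smul_of_norm_eq hv'] at hproj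
  exact div_le_of_le_mul₀ (norm_nonneg v) (by positivity) (by linarith)

/-- Key geometric estimate behind Proposition 3: if `w` is orthogonal to `v'` and
`‖v‖ = ‖v'‖ = r`, then the norm `|⟪w, v⟫|/r` of the orthogonal projection of `w`
onto `span(v)` is at most `‖w‖` times the sine `√(1 - c²)` of the angle between
`v` and `v'`, where `c = ⟪v, v'⟫ / r²`. -/
theorem proj_norm_le_sine
    {E : Type*} [NormedAddCommGroup E] [InnerProductSpace ℝ E]
    (v v' w : E) (r : ℝ) (hr : 0 < r)
    (hv : ‖v‖ = r) (hv' : ‖v'‖ = r)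
    (hw : ⟪w, v'⟫ = 0) :
    |⟪w, v⟫| / r ≤ ‖w‖ * Real.sqrt (1 - (⟪v, v'⟫ / r ^ 2) ^ 2) :=
  proj_norm_le_sine_general v v' w r hv hv' hw
end

section
/- Let L ≥ 1, let r_1,…,r_L > 0, and let (v_1,…,v_L) and (ṽ_1,…,ṽ_L) be two pairwise orthogonal families of vectors in a real inner product space with ‖v_j‖ = ‖ṽ_j‖ = r_j for all j. Fix ℓ ∈ {1,…,L} and suppose v_i = ṽ_i for all i < ℓ. Let c := ⟨v_ℓ, ṽ_ℓ⟩/r_ℓ² and let d > 0 satisfy |c − 1|·r_ℓ ≥ d (projective separation at layer ℓ). Then, writing o := ∑_{j=1}^L v_j and õ := ∑_{j=1}^L ṽ_j and Π_{v_ℓ} for the orthogonal projection onto span(v_ℓ), one has ‖Π_{v_ℓ} õ − Π_{v_ℓ} o‖ ≥ d − √(1 − c²) · √(∑_{j=ℓ+1}^L r_j²). -/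
/-!
Write `x = v ℓ`, `y = v' ℓ`, `ρ = ‖x‖ = r ℓ` and `c = ⟪x, y⟫ / ρ²`. Below layer `ℓ` the two
codewords agree and above it the layers of `o` are orthogonal to `x`, so the projections differ
by `(⟪y, x⟫ - ρ² + ⟪w, x⟫) / ρ²` times `x`, where `w = ∑_{j > ℓ} v' j`. The first part has norm
`|c - 1| ρ ≥ d`. Since `w ⟂ y`, the drift `⟪w, x⟫` equals `⟪w, x - c • y⟫`, and Cauchy–Schwarz
with `‖x - c • y‖ = ρ √(1 - c²)` and Pythagoras `‖w‖² = ∑_{j > ℓ} r j²` bounds its contribution.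
-/

open scoped RealInnerProductSpace

section InnerProductSpace

variable {E : Type*} [NormedAddCommGroup E] [InnerProductSpace ℝ E]

theorem norm_sum_sq_of_pairwise_inner_eq_zero {ι : Type*} {v : ι → E}
    (hv : ∀ i j, i ≠ j → ⟪v i, v j⟫ = 0) (s : Finset ι) :
    ‖∑ i ∈ s, v i‖ ^ 2 = ∑ i ∈ s, ‖v i‖ ^ 2 := by
  classical
  rw [← real_inner_self_eq_norm_sq, sum_inner]
  refine Finset.sum_congr rfl fun i hi => ?_
  rw [inner_sum, Finset.sum_eq_single_of_mem i hi fun j _ hji => hv i j hji.symm,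
    real_inner_self_eq_norm_sq]

theorem norm_div_sq_smul_sub_div_sq_smul (x : E) (a b : ℝ) :
    ‖(a / ‖x‖ ^ 2) • x - (b / ‖x‖ ^ 2) • x‖ = |a - b| / ‖x‖ := by
  rcases (norm_nonneg x).eq_or_lt with hx | hx
  · simp [← hx]
  · rw [← sub_smul, norm_smul, Real.norm_eq_abs, ← sub_div, abs_div, abs_of_pos (pow_pos hx 2)]
    field_simp

theorem norm_sub_inner_div_sq_smul_of_norm_eq {x y : E} (hxy : ‖x‖ = ‖y‖) :
    ‖x - (⟪x, y⟫ / ‖x‖ ^ 2) • y‖ = ‖x‖ * √(1 - (⟪x, y⟫ / ‖x‖ ^ 2) ^ 2) := by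
  rcases (norm_nonneg x).eq_or_lt with hx | hx
  · simp [norm_eq_zero.mp hx.symm]
  · have hsq : ‖x - (⟪x, y⟫ / ‖x‖ ^ 2) • y‖ ^ 2 = ‖x‖ ^ 2 * (1 - (⟪x, y⟫ / ‖x‖ ^ 2) ^ 2) := by
      rw [norm_sub_sq_real, norm_smul, inner_smul_right, Real.norm_eq_abs, mul_pow, sq_abs, ← hxy]
      field_simp
      ring
    rw [← Real.sqrt_sq (norm_nonneg _), hsq, Real.sqrt_mul (sq_nonneg _), Real.sqrt_sq hx.le]

theorem abs_inner_le_of_inner_eq_zero_of_norm_eq {w x y : E} (hxy : ‖x‖ = ‖y‖)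
    (hwy : ⟪w, y⟫ = 0) :
    |⟪w, x⟫| ≤ ‖w‖ * (‖x‖ * √(1 - (⟪x, y⟫ / ‖x‖ ^ 2) ^ 2)) := by
  have hinner : ⟪w, x⟫ = ⟪w, x - (⟪x, y⟫ / ‖x‖ ^ 2) • y⟫ := by
    rw [inner_sub_right, inner_smul_right, hwy, mul_zero, sub_zero]
  rw [hinner, ← norm_sub_inner_div_sq_smul_of_norm_eq hxy]
  exact abs_real_inner_le_norm _ _

theorem inner_sum_sub_inner_sum_of_eq_of_lt {ι : Type*} [Fintype ι] [LinearOrder ι]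
    {v v' : ι → E} (hv : ∀ i j, i ≠ j → ⟪v i, v j⟫ = 0) {ℓ : ι}
    (hagree : ∀ i, i < ℓ → v i = v' i) :
    ⟪∑ j, v' j, v ℓ⟫ - ⟪∑ j, v j, v ℓ⟫ =
      ⟪v' ℓ, v ℓ⟫ - ‖v ℓ‖ ^ 2 + ⟪∑ j ∈ Finset.univ.filter (fun j => ℓ < j), v' j, v ℓ⟫ := by
  have hterm : ∀ j, ⟪v' j - v j, v ℓ⟫ =
      (if j = ℓ then ⟪v' ℓ, v ℓ⟫ - ‖v ℓ‖ ^ 2 else 0) + (if ℓ < j then ⟪v' j, v ℓ⟫ else 0) := by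
    intro j
    rcases lt_trichotomy j ℓ with hj | rfl | hj
    · simp [← hagree j hj, hj.ne, hj.not_gt]
    · simp [inner_sub_left]
    · simp [inner_sub_left, hv j ℓ hj.ne', hj, hj.ne']
  rw [← inner_sub_left, ← Finset.sum_sub_distrib, sum_inner,
    Finset.sum_congr rfl fun j _ => hterm j, Finset.sum_add_distrib, Finset.sum_ite_eq', sum_inner,
    Finset.sum_filter]
  simp

end InnerProductSpace

theorem abs_div_sq_sub_one_mul (a ρ : ℝ) : |a / ρ ^ 2 - 1| * ρ = |a - ρ ^ 2| / ρ := by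
  rcases eq_or_ne ρ 0 with hρ | hρ
  · simp [hρ]
  · rw [div_sub_one (pow_ne_zero 2 hρ), abs_div, abs_sq]
    field_simp

theorem layer_projection_separation_general
    {E : Type*} [NormedAddCommGroup E] [InnerProductSpace ℝ E]
    (L : ℕ) (r : Fin L → ℝ)
    (v v' : Fin L → E)
    (hvorth : ∀ i j, i ≠ j → ⟪v i, v j⟫ = 0)
    (hv'orth : ∀ i j, i ≠ j → ⟪v' i, v' j⟫ = 0)
    (hvnorm : ∀ j, ‖v j‖ = r j) (hv'norm : ∀ j, ‖v' j‖ = r j)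
    (ℓ : Fin L) (hagree : ∀ i, i < ℓ → v i = v' i)
    (d : ℝ)
    (hsep : d ≤ |⟪v ℓ, v' ℓ⟫ / (r ℓ) ^ 2 - 1| * r ℓ) :
    d - Real.sqrt (1 - (⟪v ℓ, v' ℓ⟫ / (r ℓ) ^ 2) ^ 2) *
        Real.sqrt (∑ j ∈ Finset.univ.filter (fun j => ℓ < j), (r j) ^ 2)
      ≤ ‖(⟪∑ j, v' j, v ℓ⟫ / (r ℓ) ^ 2) • v ℓ -
          (⟪∑ j, v j, v ℓ⟫ / (r ℓ) ^ 2) • v ℓ‖ := by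
  set w := ∑ j ∈ Finset.univ.filter (fun j => ℓ < j), v' j
  have hw : √(∑ j ∈ Finset.univ.filter (fun j => ℓ < j), (r j) ^ 2) = ‖w‖ := by
    simp_rw [← hv'norm]
    rw [← norm_sum_sq_of_pairwise_inner_eq_zero hv'orth, Real.sqrt_sq (norm_nonneg _)]
  have hwy : ⟪w, v' ℓ⟫ = 0 := by
    rw [sum_inner]
    exact Finset.sum_eq_zero fun j hj => hv'orth j ℓ (Finset.mem_filter.1 hj).2.ne'
  have hdrift := abs_inner_le_of_inner_eq_zero_of_norm_eq ((hvnorm ℓ).trans (hv'norm ℓ).symm) hwy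
  rw [← hvnorm ℓ] at hsep ⊢
  rw [hw, norm_div_sq_smul_sub_div_sq_smul, inner_sum_sub_inner_sum_of_eq_of_lt hvorth hagree]
  calc d - √(1 - (⟪v ℓ, v' ℓ⟫ / ‖v ℓ‖ ^ 2) ^ 2) * ‖w‖
      ≤ |⟪v ℓ, v' ℓ⟫ / ‖v ℓ‖ ^ 2 - 1| * ‖v ℓ‖ - |⟪w, v ℓ⟫| / ‖v ℓ‖ :=
        sub_le_sub hsep <|
          div_le_of_le_mul₀ (norm_nonneg _) (by positivity) (hdrift.trans_eq (by ring))
    _ = (|⟪v' ℓ, v ℓ⟫ - ‖v ℓ‖ ^ 2| - |⟪w, v ℓ⟫|) / ‖v ℓ‖ := by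
        rw [abs_div_sq_sub_one_mul, real_inner_comm, sub_div]
    _ ≤ |⟪v' ℓ, v ℓ⟫ - ‖v ℓ‖ ^ 2 + ⟪w, v ℓ⟫| / ‖v ℓ‖ := by
        gcongr
        exact abs_sub_abs_le_abs_add _ _

/-- Abstract form of Proposition 3: two multi-layer codewords `o = ∑ j, v j` and
`o' = ∑ j, v' j` built from pairwise orthogonal layer vectors of norms `r j`,
agreeing below layer `ℓ` and projectively `d`-separated at layer `ℓ`, have
projections onto `span(v ℓ)` separated by at least
`d - √(1 - c²) · √(∑_{j > ℓ} (r j)²)`, where `c = ⟪v ℓ, v' ℓ⟫ / (r ℓ)²`. -/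
theorem layer_projection_separation
    {E : Type*} [NormedAddCommGroup E] [InnerProductSpace ℝ E]
    (L : ℕ) (hL : 1 ≤ L) (r : Fin L → ℝ) (hr : ∀ j, 0 < r j)
    (v v' : Fin L → E)
    (hvorth : ∀ i j, i ≠ j → ⟪v i, v j⟫ = 0)
    (hv'orth : ∀ i j, i ≠ j → ⟪v' i, v' j⟫ = 0)
    (hvnorm : ∀ j, ‖v j‖ = r j) (hv'norm : ∀ j, ‖v' j‖ = r j)
    (ℓ : Fin L) (hagree : ∀ i, i < ℓ → v i = v' i)
    (d : ℝ) (hd : 0 < d)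
    (hsep : d ≤ |⟪v ℓ, v' ℓ⟫ / (r ℓ) ^ 2 - 1| * r ℓ) :
    d - Real.sqrt (1 - (⟪v ℓ, v' ℓ⟫ / (r ℓ) ^ 2) ^ 2) *
        Real.sqrt (∑ j ∈ Finset.univ.filter (fun j => ℓ < j), (r j) ^ 2)
      ≤ ‖(⟪∑ j, v' j, v ℓ⟫ / (r ℓ) ^ 2) • v ℓ -
          (⟪∑ j, v j, v ℓ⟫ / (r ℓ) ^ 2) • v ℓ‖ :=
  layer_projection_separation_general L r v v' hvorth hv'orth hvnorm hv'norm ℓ hagree d hsep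
end

section
/- Let A > 0, n ≥ 1, and let x = (x_1,…,x_n) ∈ [0,A]^n. Let Y_1,…,Y_n be independent random variables with Y_i Poisson-distributed with rate x_i, and set Z_i := Y_i − x_i. Then for every vector e ∈ ℝ^n with ∑_{i=1}^n e_i² = 1 and every t > 0, one has P( |∑_{i=1}^n e_i Z_i| > t ) ≤ 2·exp( −(3/2)·t + (9/4)·A ). -/
/-
Chernoff bound with parameter 3/2. By independence the moment generating function of
`∑ eᵢ Zᵢ` factors into the centred Poisson ones, `E[exp(c(Y - x))] = exp(x(eᶜ - 1 - c))`.
Since `|eᵢ| ≤ 1`, each exponent `cᵢ = (3/2) eᵢ` lies in `[-3/2, 3/2]`, where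
`eᶜ - 1 - c ≤ c²`; with `xᵢ ≤ A` and `∑ eᵢ² = 1` the mgf is at most
`exp((3/2)² A) = exp((9/4) A)`.
The two tails are bounded separately, giving the factor 2.
-/

open MeasureTheory

/-- The Poisson measure with rate `x`, viewed as a measure on ℝ supported on the
natural numbers: mass `e^{-x} x^k / k!` at each `k ∈ ℕ`. -/
noncomputable def poissonMeasureReal (x : ℝ) : Measure ℝ :=
  Measure.sum fun k : ℕ =>
    ENNReal.ofReal (Real.exp (-x) * x ^ k / (Nat.factorial k)) • Measure.dirac (k : ℝ)

open Real ProbabilityTheory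
open scoped ENNReal

lemma hasSum_pow_div_factorial_exp (z : ℝ) :
    HasSum (fun k : ℕ => z ^ k / k.factorial) (exp z) :=
  exp_eq_exp_ℝ ▸ NormedSpace.expSeries_div_hasSum_exp z

lemma hasSum_exp_sub_one_sub (s : ℝ) :
    HasSum (fun k : ℕ => s ^ (k + 2) / (k + 2).factorial) (exp s - 1 - s) := by
  have h := (hasSum_nat_add_iff' 2).mpr (hasSum_pow_div_factorial_exp s)
  simpa [Finset.sum_range_succ, sub_sub] using h

lemma exp_sub_one_sub_le_of_abs_le {s r : ℝ} (hsr : |s| ≤ r) :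
    exp s - 1 - s ≤ (s / r) ^ 2 * (exp r - 1 - r) := by
  refine hasSum_le (fun k => ?_) (hasSum_exp_sub_one_sub s) ((hasSum_exp_sub_one_sub r).mul_left _)
  rw [← mul_div_assoc]
  gcongr
  calc s ^ (k + 2) ≤ |s| ^ (k + 2) := by rw [← abs_pow]; exact le_abs_self _
    _ = s ^ 2 * |s| ^ k := by rw [pow_add, sq_abs, mul_comm]
    _ ≤ s ^ 2 * r ^ k := by gcongr
    _ = (s / r) ^ 2 * r ^ (k + 2) := by
      rcases ((abs_nonneg s).trans hsr).eq_or_lt with hr | hr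
      · obtain rfl : s = 0 := abs_nonpos_iff.mp (hr ▸ hsr)
        simp
      · field_simp; ring

lemma exp_three_halves_le : exp (3 / 2) ≤ 19 / 4 := by
  have h3 : exp (3 / 2) ^ 2 = exp 1 ^ 3 := by
    rw [← exp_nat_mul, ← exp_nat_mul]; norm_num
  have h1 : exp 1 ^ 3 ≤ 2.7182818286 ^ 3 := by gcongr; exact exp_one_lt_d9.le
  nlinarith [exp_pos (3 / 2)]

-- `exp (3/2) ≤ 19/4` makes the constant `(exp r - 1 - r) / r²` of the previous lemma at most 1.
lemma exp_sub_one_sub_le_sq {s : ℝ} (hs : |s| ≤ 3 / 2) : exp s - 1 - s ≤ s ^ 2 := by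
  have h := exp_sub_one_sub_le_of_abs_le hs
  have : (s / (3 / 2)) ^ 2 * (exp (3 / 2) - 1 - 3 / 2) ≤ s ^ 2 := by
    nlinarith [exp_three_halves_le, sq_nonneg s]
  linarith

lemma lintegral_exp_mul_poissonMeasureReal {x : ℝ} (hx : 0 ≤ x) (c : ℝ) :
    ∫⁻ z, ENNReal.ofReal (exp (c * z)) ∂poissonMeasureReal x
      = ENNReal.ofReal (exp (x * (exp c - 1))) := by
  have hterm : ∀ k : ℕ, ENNReal.ofReal (exp (-x) * x ^ k / k.factorial)
      * ENNReal.ofReal (exp (c * k))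
        = ENNReal.ofReal (exp (-x) * ((x * exp c) ^ k / k.factorial)) := by
    intro k
    rw [← ENNReal.ofReal_mul (by positivity), mul_pow, ← exp_nat_mul, mul_comm (k : ℝ) c]
    ring_nf
  simp_rw [poissonMeasureReal, lintegral_sum_measure, lintegral_smul_measure, lintegral_dirac,
    smul_eq_mul, hterm]
  rw [← ENNReal.ofReal_tsum_of_nonneg (fun k => by positivity)
      ((summable_pow_div_factorial _).mul_left _), tsum_mul_left,
    (hasSum_pow_div_factorial_exp _).tsum_eq, ← exp_add]
  ring_nf

lemma isProbabilityMeasure_poissonMeasureReal {x : ℝ} (hx : 0 ≤ x) :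
    IsProbabilityMeasure (poissonMeasureReal x) :=
  ⟨by simpa using lintegral_exp_mul_poissonMeasureReal hx 0⟩

lemma lintegral_exp_mul_sub_poissonMeasureReal {x : ℝ} (hx : 0 ≤ x) (c : ℝ) :
    ∫⁻ z, ENNReal.ofReal (exp (c * (z - x))) ∂poissonMeasureReal x
      = ENNReal.ofReal (exp (x * (exp c - 1 - c))) := by
  have hsplit : ∀ z, ENNReal.ofReal (exp (c * (z - x)))
      = ENNReal.ofReal (exp (c * z)) * ENNReal.ofReal (exp (-(c * x))) := fun z => by
    rw [← ENNReal.ofReal_mul (exp_pos _).le, ← exp_add, mul_sub, sub_eq_add_neg]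
  simp_rw [hsplit]
  rw [lintegral_mul_const _ (by fun_prop), lintegral_exp_mul_poissonMeasureReal hx,
    ← ENNReal.ofReal_mul (exp_pos _).le, ← exp_add]
  ring_nf

lemma lintegral_pi_prod_eq_prod {ι : Type*} [Fintype ι] {Ω : ι → Type*}
    [∀ i, MeasurableSpace (Ω i)] (μ : ∀ i, Measure (Ω i)) [∀ i, IsProbabilityMeasure (μ i)]
    {f : ∀ i, Ω i → ℝ≥0∞} (hf : ∀ i, Measurable (f i)) :
    ∫⁻ ω, ∏ i, f i (ω i) ∂Measure.pi μ = ∏ i, ∫⁻ z, f i z ∂μ i := by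
  rw [lintegral_prod_eq_prod_lintegral_of_indepFun _ _
    (iIndepFun_pi fun i => (hf i).aemeasurable) fun i => (hf i).comp (measurable_pi_apply i)]
  exact Finset.prod_congr rfl fun i _ =>
    (measurePreserving_eval μ i).lintegral_comp (hf i)

lemma measure_lt_le_exp_mul_lintegral_exp {Ω : Type*} [MeasurableSpace Ω] (μ : Measure Ω)
    {X : Ω → ℝ} (hX : Measurable X) {s : ℝ} (hs : 0 ≤ s) (t : ℝ) :
    μ {ω | t < X ω}
      ≤ ENNReal.ofReal (exp (-s * t)) * ∫⁻ ω, ENNReal.ofReal (exp (s * X ω)) ∂μ := by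
  rw [← lintegral_indicator_one (measurableSet_lt measurable_const hX),
    ← lintegral_const_mul _ (by fun_prop)]
  refine lintegral_mono fun ω => ?_
  by_cases hω : t < X ω
  · rw [Set.indicator_of_mem (show ω ∈ {ω | t < X ω} from hω), Pi.one_apply,
      ← ENNReal.ofReal_mul (exp_pos _).le, ← exp_add]
    exact ENNReal.one_le_ofReal.mpr (one_le_exp (by nlinarith))
  · simp [hω]

lemma mul_exp_sub_one_sub_le {x A c : ℝ} (hx : x ∈ Set.Icc 0 A) (hc : |c| ≤ 3 / 2) :
    x * (exp c - 1 - c) ≤ A * c ^ 2 :=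
  calc x * (exp c - 1 - c) ≤ x * c ^ 2 := by gcongr; exacts [hx.1, exp_sub_one_sub_le_sq hc]
    _ ≤ A * c ^ 2 := by gcongr; exact hx.2

lemma abs_le_one_of_sum_sq_eq_one {ι : Type*} [Fintype ι] {e : ι → ℝ}
    (he : ∑ i, e i ^ 2 = 1) (i : ι) : |e i| ≤ 1 :=
  sq_le_one_iff_abs_le_one _ |>.mp <|
    he ▸ Finset.single_le_sum (fun j _ => sq_nonneg (e j)) (Finset.mem_univ i)

section PoissonProjection

variable {ι : Type*} [Fintype ι] {A : ℝ} {x : ι → ℝ} {e : ι → ℝ}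

lemma lintegral_exp_projection_poisson_le (hx : ∀ i, x i ∈ Set.Icc 0 A)
    (he : ∑ i, e i ^ 2 = 1) :
    ∫⁻ y, ENNReal.ofReal (exp (3 / 2 * ∑ i, e i * (y i - x i)))
        ∂Measure.pi (fun i => poissonMeasureReal (x i))
      ≤ ENNReal.ofReal (exp (9 / 4 * A)) := by
  have := fun i => isProbabilityMeasure_poissonMeasureReal (hx i).1
  have hfactor : ∀ y : ι → ℝ, ENNReal.ofReal (exp (3 / 2 * ∑ i, e i * (y i - x i)))
      = ∏ i, ENNReal.ofReal (exp (3 / 2 * e i * (y i - x i))) := fun y => by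
    rw [← ENNReal.ofReal_prod_of_nonneg (fun i _ => (exp_pos _).le), ← exp_sum, Finset.mul_sum]
    simp_rw [mul_assoc]
  simp_rw [hfactor]
  rw [lintegral_pi_prod_eq_prod _
    (f := fun i z => ENNReal.ofReal (exp (3 / 2 * e i * (z - x i)))) (fun i => by fun_prop)]
  simp_rw [lintegral_exp_mul_sub_poissonMeasureReal (hx _).1]
  rw [← ENNReal.ofReal_prod_of_nonneg (fun i _ => (exp_pos _).le), ← exp_sum]
  gcongr
  calc ∑ i, x i * (exp (3 / 2 * e i) - 1 - 3 / 2 * e i) ≤ ∑ i, A * (3 / 2 * e i) ^ 2 := by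
        refine Finset.sum_le_sum fun i _ => mul_exp_sub_one_sub_le (hx i) ?_
        rw [abs_mul, abs_of_pos (by norm_num : (0 : ℝ) < 3 / 2)]
        linarith [abs_le_one_of_sum_sq_eq_one he i]
    _ = 9 / 4 * A := by simp_rw [mul_pow, ← Finset.mul_sum, he]; ring

lemma poisson_projection_tail_le (hx : ∀ i, x i ∈ Set.Icc 0 A) (he : ∑ i, e i ^ 2 = 1)
    (t : ℝ) :
    Measure.pi (fun i => poissonMeasureReal (x i)) {y | t < ∑ i, e i * (y i - x i)}
      ≤ ENNReal.ofReal (exp (-(3 / 2) * t + 9 / 4 * A)) :=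
  calc _ ≤ ENNReal.ofReal (exp (-(3 / 2) * t)) * ∫⁻ y, ENNReal.ofReal
          (exp (3 / 2 * ∑ i, e i * (y i - x i))) ∂Measure.pi (fun i => poissonMeasureReal (x i)) :=
        measure_lt_le_exp_mul_lintegral_exp _ (by fun_prop) (by norm_num) t
    _ ≤ ENNReal.ofReal (exp (-(3 / 2) * t)) * ENNReal.ofReal (exp (9 / 4 * A)) := by
        gcongr; exact lintegral_exp_projection_poisson_le hx he
    _ = _ := by rw [← ENNReal.ofReal_mul (exp_pos _).le, ← exp_add]

end PoissonProjection

theorem poisson_noise_projection_concentration_general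
    (A : ℝ) (n : ℕ)
    (x : Fin n → ℝ) (hx : ∀ i, x i ∈ Set.Icc (0:ℝ) A)
    (e : Fin n → ℝ) (he : ∑ i, (e i) ^ 2 = 1)
    (t : ℝ) :
    Measure.pi (fun i => poissonMeasureReal (x i))
        {y : Fin n → ℝ | t < |∑ i, e i * (y i - x i)|}
      ≤ ENNReal.ofReal (2 * Real.exp (-(3/2) * t + (9/4) * A)) := by
  have hsplit : {y : Fin n → ℝ | t < |∑ i, e i * (y i - x i)|}
      = {y | t < ∑ i, e i * (y i - x i)} ∪ {y | t < ∑ i, (-e) i * (y i - x i)} := by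
    ext y
    simp [lt_abs, neg_mul, Finset.sum_neg_distrib]
  have he_neg : ∑ i, (-e) i ^ 2 = 1 := by simpa using he
  rw [hsplit]
  calc _ ≤ _ := measure_union_le _ _
    _ ≤ ENNReal.ofReal (exp (-(3 / 2) * t + 9 / 4 * A))
          + ENNReal.ofReal (exp (-(3 / 2) * t + 9 / 4 * A)) :=
        add_le_add (poisson_projection_tail_le hx he t) (poisson_projection_tail_le hx he_neg t)
    _ = _ := by rw [← ENNReal.ofReal_add (exp_pos _).le (exp_pos _).le, two_mul]

/-- Proposition 5: under the peak power constraint `x i ∈ [0, A]`, the projection of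
the centred Poisson noise onto any unit direction exceeds `t` in absolute value with
probability at most `2 exp(-(3/2) t + (9/4) A)`. -/
theorem poisson_noise_projection_concentration
    (A : ℝ) (hA : 0 < A) (n : ℕ) (hn : 1 ≤ n)
    (x : Fin n → ℝ) (hx : ∀ i, x i ∈ Set.Icc (0:ℝ) A)
    (e : Fin n → ℝ) (he : ∑ i, (e i) ^ 2 = 1)
    (t : ℝ) (ht : 0 < t) :
    Measure.pi (fun i => poissonMeasureReal (x i))
        {y : Fin n → ℝ | t < |∑ i, e i * (y i - x i)|}
      ≤ ENNReal.ofReal (2 * Real.exp (-(3/2) * t + (9/4) * A)) :=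
  poisson_noise_projection_concentration_general A n x hx e he t
end
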